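/- Under the finite-state assumption, for any F_t-measurable row vector Z_t ∈ R^{1×N}, the conditional second moment of Z_t M_{t+1} admits the explicit formula: if Z̃_t is the representative equivalent to Z_t with last component 0 (i.e., Z̃_t^k = Z_t^k - Z_t^N for k < N, Z̃_t^N = 0), then E[(Z_t M_{t+1})^2 | F_t] ≤ (N-1) Σ_{k=1}^{N-1} (1 - P_t^k) P_t^k (Z̃_t^k)^2, where P_t^k = e_k^* E[W_{t+1}|F_t]. -/
import Mathlib


open Finset Matrix

section Setup

variable {Ω : Type*} [Fintype Ω] [DecidableEq Ω] {N : ℕ}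

/-- A probability on a finite sample space with everywhere-positive weights. -/
structure FinProb (Ω : Type*) [Fintype Ω] where
  p : Ω → ℝ
  pos : ∀ ω, 0 < p ω
  sum_one : ∑ ω, p ω = 1

/-- `ω` and `ω'` share the same `W`-path up to time `t` (the atoms of `F_t`). -/
def samePath (W : ℕ → Ω → Fin N) (t : ℕ) (ω ω' : Ω) : Prop :=
  ∀ s ∈ Finset.range (t + 1), W s ω = W s ω'

instance (W : ℕ → Ω → Fin N) (t : ℕ) (ω ω' : Ω) : Decidable (samePath W t ω ω') := by
  unfold samePath; infer_instance

/-- `F_t`-measurability: `f` is constant on the atoms of `F_t`. -/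
def measF (W : ℕ → Ω → Fin N) (t : ℕ) {α : Type*} (f : Ω → α) : Prop :=
  ∀ ω ω', samePath W t ω ω' → f ω = f ω'

/-- Conditional expectation given `F_t`. -/
noncomputable def cexp (P : FinProb Ω) (W : ℕ → Ω → Fin N) (t : ℕ)
    {E : Type*} [AddCommGroup E] [Module ℝ E] (Y : Ω → E) (ω : Ω) : E :=
  (∑ ω' ∈ univ.filter (fun ω' => samePath W t ω ω'), P.p ω')⁻¹ •
    ∑ ω' ∈ univ.filter (fun ω' => samePath W t ω ω'), P.p ω' • Y ω'

/-- The basis-vector valued process `W_t ∈ {e_1,…,e_N} ⊆ ℝ^N`. -/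
def wvec (W : ℕ → Ω → Fin N) (t : ℕ) (ω : Ω) : Fin N → ℝ :=
  fun j => if W t ω = j then 1 else 0

/-- `M_{t+1} = W_{t+1} - E[W_{t+1} | F_t]` (indexed so that `Mdiff P W t` is `M_{t+1}`). -/
noncomputable def Mdiff (P : FinProb Ω) (W : ℕ → Ω → Fin N) (t : ℕ) (ω : Ω) : Fin N → ℝ :=
  wvec W (t + 1) ω - cexp P W t (wvec W (t + 1)) ω

/-- One-step conditional transition probability `P_t^k = e_k^* E[W_{t+1}|F_t]`. -/
noncomputable def Pt (P : FinProb Ω) (W : ℕ → Ω → Fin N) (t : ℕ) (k : Fin N) (ω : Ω) : ℝ :=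
  cexp P W t (fun ω' => wvec W (t + 1) ω' k) ω

/-- The `N × (N-1)` matrix `Ĩ` whose top block is the identity and last row is all `-1`. -/
def Itil (n : ℕ) : Matrix (Fin (n + 1)) (Fin n) ℝ :=
  fun i j => if (i : ℕ) = (j : ℕ) then 1 else if (i : ℕ) = n then -1 else 0

end Setup

section Aux

variable {Ω : Type*} [Fintype Ω] [DecidableEq Ω] {N : ℕ}

lemma samePath_refl (W : ℕ → Ω → Fin N) (t : ℕ) (ω : Ω) : samePath W t ω ω :=
  fun _ _ => rfl

lemma samePath_symm {W : ℕ → Ω → Fin N} {t : ℕ} {ω ω' : Ω} (h : samePath W t ω ω') :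
    samePath W t ω' ω := fun s hs => (h s hs).symm

lemma samePath_trans {W : ℕ → Ω → Fin N} {t : ℕ} {ω ω' ω'' : Ω}
    (h : samePath W t ω ω') (h' : samePath W t ω' ω'') : samePath W t ω ω'' :=
  fun s hs => (h s hs).trans (h' s hs)

lemma atom_eq {W : ℕ → Ω → Fin N} {t : ℕ} {ω ω' : Ω} (h : samePath W t ω ω') :
    Finset.univ.filter (fun x => samePath W t ω' x) =
      Finset.univ.filter (fun x => samePath W t ω x) := by
  ext x
  simp only [Finset.mem_filter, Finset.mem_univ, true_and]
  exact ⟨fun hx => samePath_trans h hx, fun hx => samePath_trans (samePath_symm h) hx⟩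

lemma sum_wvec (W : ℕ → Ω → Fin N) (t : ℕ) (ω : Ω) : ∑ j, wvec W t ω j = 1 := by
  unfold wvec
  simp

lemma wvec_sq (W : ℕ → Ω → Fin N) (t : ℕ) (ω : Ω) (j : Fin N) :
    (wvec W t ω j) ^ 2 = wvec W t ω j := by
  unfold wvec
  by_cases h : W t ω = j <;> simp [h]

lemma atom_sum_pos (P : FinProb Ω) (W : ℕ → Ω → Fin N) (t : ℕ) (ω : Ω) :
    0 < ∑ y ∈ Finset.univ.filter (fun y => samePath W t ω y), P.p y :=
  Finset.sum_pos (fun i _ => P.pos i) ⟨ω, by simp [samePath_refl]⟩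

lemma Pt_sum_eq_one (P : FinProb Ω) (W : ℕ → Ω → Fin N) (t : ℕ) (x : Ω) :
    ∑ j, Pt P W t j x = 1 := by
  unfold Pt cexp
  simp only [smul_eq_mul]
  rw [← Finset.mul_sum, Finset.sum_comm]
  have h : ∀ y ∈ Finset.univ.filter (fun y => samePath W t x y),
      ∑ j, P.p y * wvec W (t + 1) y j = P.p y := by
    intro y _
    rw [← Finset.mul_sum, sum_wvec, mul_one]
  rw [Finset.sum_congr rfl h]
  exact inv_mul_cancel₀ (ne_of_gt (atom_sum_pos P W t x))

lemma Mdiff_apply (P : FinProb Ω) (W : ℕ → Ω → Fin N) (t : ℕ) (x : Ω) (j : Fin N) :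
    Mdiff P W t x j = wvec W (t + 1) x j - Pt P W t j x := by
  unfold Mdiff Pt cexp
  simp [Finset.sum_apply]

end Aux

/-- upper bound for the conditional second moment of `Z_t M_{t+1}`. -/
theorem stmt2 {Ω : Type*} [Fintype Ω] [DecidableEq Ω] {n : ℕ}
    (P : FinProb Ω) (W : ℕ → Ω → Fin (n + 1)) (t : ℕ)
    (hpos : ∀ k ω, 0 < Pt P W t k ω)
    (Z : Ω → Fin (n + 1) → ℝ) (hZ : measF W t Z) :
    ∀ ω, cexp P W t (fun ω' => (dotProduct (Z ω') (Mdiff P W t ω')) ^ 2) ω ≤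
      (n : ℝ) * ∑ k : Fin n, (1 - Pt P W t k.castSucc ω) * Pt P W t k.castSucc ω *
        (Z ω k.castSucc - Z ω (Fin.last n)) ^ 2 := by
  intro ω
  classical
  set A := Finset.univ.filter (fun ω' => samePath W t ω ω') with hA
  have hωA : ω ∈ A := by simp [hA, samePath_refl]
  set S := ∑ ω' ∈ A, P.p ω' with hSdef
  have hSpos : 0 < S := Finset.sum_pos (fun i _ => P.pos i) ⟨ω, hωA⟩
  have hSne : S ≠ 0 := ne_of_gt hSpos
  have hcexp : ∀ Y : Ω → ℝ, cexp P W t Y ω = S⁻¹ * ∑ ω' ∈ A, P.p ω' * Y ω' := by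
    intro Y
    unfold cexp
    simp only [smul_eq_mul, ← hA, ← hSdef]
  -- Pt is constant on the atom of ω
  have hPtA : ∀ (k : Fin (n + 1)), ∀ x ∈ A, Pt P W t k x = Pt P W t k ω := by
    intro k x hx
    have h : samePath W t ω x := by simpa [hA] using hx
    unfold Pt cexp
    rw [atom_eq h]
  -- Pt as a weighted sum over the atom
  have hPtval : ∀ k : Fin (n + 1),
      ∑ x ∈ A, P.p x * wvec W (t + 1) x k = S * Pt P W t k ω := by
    intro k
    unfold Pt
    rw [hcexp]
    field_simp
  -- abbreviations (written out each time)
  -- key decomposition on the atom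
  have key : ∀ x ∈ A, dotProduct (Z x) (Mdiff P W t x) =
      ∑ k : Fin n, (Z ω k.castSucc - Z ω (Fin.last n)) *
        (wvec W (t + 1) x k.castSucc - Pt P W t k.castSucc ω) := by
    intro x hx
    have hsp : samePath W t ω x := by simpa [hA] using hx
    have hZx : Z x = Z ω := (hZ ω x hsp).symm
    have hterm : ∀ j, Z x j * Mdiff P W t x j =
        Z ω j * (wvec W (t + 1) x j - Pt P W t j ω) := by
      intro j
      rw [hZx, Mdiff_apply, hPtA j x hx]
    rw [dotProduct, Finset.sum_congr rfl fun j _ => hterm j]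
    have h1 : ∑ j, wvec W (t + 1) x j = 1 := sum_wvec W (t + 1) x
    have h2 : ∑ j, Pt P W t j ω = 1 := Pt_sum_eq_one P W t ω
    rw [Fin.sum_univ_castSucc] at h1 h2
    rw [Fin.sum_univ_castSucc]
    have h3 : wvec W (t + 1) x (Fin.last n) - Pt P W t (Fin.last n) ω =
        ∑ k : Fin n, (Pt P W t k.castSucc ω - wvec W (t + 1) x k.castSucc) := by
      rw [Finset.sum_sub_distrib]
      linarith
    rw [h3, Finset.mul_sum, ← Finset.sum_add_distrib]
    apply Finset.sum_congr rfl
    intro k _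
    ring
  -- conditional second moment of each m_k
  have hmom : ∀ k : Fin n,
      ∑ x ∈ A, P.p x * (wvec W (t + 1) x k.castSucc - Pt P W t k.castSucc ω) ^ 2 =
        S * ((1 - Pt P W t k.castSucc ω) * Pt P W t k.castSucc ω) := by
    intro k
    have hterm : ∀ x ∈ A,
        P.p x * (wvec W (t + 1) x k.castSucc - Pt P W t k.castSucc ω) ^ 2 =
          P.p x * wvec W (t + 1) x k.castSucc * (1 - 2 * Pt P W t k.castSucc ω) +
            P.p x * (Pt P W t k.castSucc ω) ^ 2 := by
      intro x _
      have hw := wvec_sq W (t + 1) x k.castSucc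
      linear_combination P.p x * hw
    rw [Finset.sum_congr rfl hterm, Finset.sum_add_distrib, ← Finset.sum_mul,
      hPtval k.castSucc, ← Finset.sum_mul, ← hSdef]
    ring
  -- main estimate
  rw [hcexp]
  have step1 : ∑ x ∈ A, P.p x * (dotProduct (Z x) (Mdiff P W t x)) ^ 2 ≤
      ∑ x ∈ A, P.p x * ((n : ℝ) * ∑ k : Fin n,
        (Z ω k.castSucc - Z ω (Fin.last n)) ^ 2 *
          (wvec W (t + 1) x k.castSucc - Pt P W t k.castSucc ω) ^ 2) := by
    apply Finset.sum_le_sum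
    intro x hx
    apply mul_le_mul_of_nonneg_left _ (P.pos x).le
    rw [key x hx]
    calc (∑ k : Fin n, (Z ω k.castSucc - Z ω (Fin.last n)) *
            (wvec W (t + 1) x k.castSucc - Pt P W t k.castSucc ω)) ^ 2
        ≤ ((Finset.univ : Finset (Fin n)).card : ℝ) *
            ∑ k : Fin n, ((Z ω k.castSucc - Z ω (Fin.last n)) *
              (wvec W (t + 1) x k.castSucc - Pt P W t k.castSucc ω)) ^ 2 :=
          sq_sum_le_card_mul_sum_sq
      _ = (n : ℝ) * ∑ k : Fin n, (Z ω k.castSucc - Z ω (Fin.last n)) ^ 2 *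
            (wvec W (t + 1) x k.castSucc - Pt P W t k.castSucc ω) ^ 2 := by
          simp [Finset.card_univ, mul_pow]
  have swap : ∑ x ∈ A, P.p x * ((n : ℝ) * ∑ k : Fin n,
      (Z ω k.castSucc - Z ω (Fin.last n)) ^ 2 *
        (wvec W (t + 1) x k.castSucc - Pt P W t k.castSucc ω) ^ 2) =
      (n : ℝ) * ∑ k : Fin n, (Z ω k.castSucc - Z ω (Fin.last n)) ^ 2 *
        ∑ x ∈ A, P.p x * (wvec W (t + 1) x k.castSucc - Pt P W t k.castSucc ω) ^ 2 := by
    simp only [Finset.mul_sum]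
    rw [Finset.sum_comm]
    apply Finset.sum_congr rfl
    intro k _
    apply Finset.sum_congr rfl
    intro x _
    ring
  calc S⁻¹ * ∑ x ∈ A, P.p x * (dotProduct (Z x) (Mdiff P W t x)) ^ 2
      ≤ S⁻¹ * ∑ x ∈ A, P.p x * ((n : ℝ) * ∑ k : Fin n,
          (Z ω k.castSucc - Z ω (Fin.last n)) ^ 2 *
            (wvec W (t + 1) x k.castSucc - Pt P W t k.castSucc ω) ^ 2) :=
        mul_le_mul_of_nonneg_left step1 (inv_nonneg.2 hSpos.le)
    _ = (n : ℝ) * ∑ k : Fin n, (1 - Pt P W t k.castSucc ω) * Pt P W t k.castSucc ω *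
          (Z ω k.castSucc - Z ω (Fin.last n)) ^ 2 := by
        rw [swap]
        rw [Finset.sum_congr rfl fun k _ => by rw [hmom k]]
        rw [show ∑ k : Fin n, (Z ω k.castSucc - Z ω (Fin.last n)) ^ 2 *
            (S * ((1 - Pt P W t k.castSucc ω) * Pt P W t k.castSucc ω)) =
            S * ∑ k : Fin n, (1 - Pt P W t k.castSucc ω) * Pt P W t k.castSucc ω *
              (Z ω k.castSucc - Z ω (Fin.last n)) ^ 2 by
          rw [Finset.mul_sum]; exact Finset.sum_congr rfl fun k _ => by ring]
        field_simp
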